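/- arXiv:2602.18102 — 5 statements merged into one kernel-verified Lean document; each statement's English description precedes it below -/
import Mathlib

section
/- The |·|-twisted current bracket makes 𝔫[u] a Lie algebra over ℚ: the ℚ-bilinear bracket determined by [x u^p, y u^q] = (|a|^p |b|^q / |a+b|^{p+q}) [x,y] u^{p+q} for x ∈ 𝔫_a, y ∈ 𝔫_b, p,q ∈ ℕ is antisymmetric ([ξ,η] = −[η,ξ]) and satisfies the Jacobi identity [[ξ,η],ζ] + [[η,ζ],ξ] + [[ζ,ξ],η] = 0 for all ξ, η, ζ ∈ 𝔫[u]. -/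
/-!
Both identities are multilinear, so it suffices to check them on the homogeneous monomials
`x u^p` with `x ∈ 𝔫_a`, which span `𝔫[u]`. On monomials antisymmetry is that of `𝔫`, since the
twist coefficient is symmetric. For Jacobi, the coefficients of a double bracket multiply out to
`|a|^p |b|^q |c|^r / |a+b+c|^(p+q+r)`, which is invariant under cyclic permutation, so the cyclic
sum is this common coefficient times the Jacobiator of `𝔫`. The only care needed is when
`|a+b| = 0`: then `a + b = 0` and `⁅x, y⁆ ∈ 𝔫_0 = 0`.
-/

noncomputable def twistCoeff {M : Type*} [AddCommMonoid M] (absM : M →+ ℤ)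
    (a b : M) (p q : ℕ) : ℚ :=
  ((absM a : ℚ) ^ p * (absM b : ℚ) ^ q) / ((absM (a + b) : ℚ) ^ (p + q))

theorem lie_lie_add_lie_lie_add_lie_lie {L : Type*} [LieRing L] (x y z : L) :
    ⁅⁅x, y⁆, z⁆ + ⁅⁅y, z⁆, x⁆ + ⁅⁅z, x⁆, y⁆ = 0 := by
  rw [← lie_skew ⁅x, y⁆, ← lie_skew ⁅y, z⁆, ← lie_skew ⁅z, x⁆, ← neg_add, ← neg_add,
    lie_jacobi z x y, neg_zero]

namespace LinearMap

variable {R M N : Type*}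

theorem apply_eq_neg_apply_of_span_eq_top [CommRing R] [AddCommGroup M] [Module R M]
    [AddCommGroup N] [Module R N] (B : M →ₗ[R] M →ₗ[R] N) {S : Set M}
    (hS : Submodule.span R S = ⊤) (h : ∀ ξ ∈ S, ∀ η ∈ S, B ξ η = -B η ξ) (ξ η : M) :
    B ξ η = -B η ξ := by
  have hB : B = -B.flip :=
    ext_on hS fun ξ hξ ↦ ext_on hS fun η hη ↦ h ξ hξ η hη
  exact congr($hB ξ η)

theorem jacobi_of_span_eq_top [CommSemiring R] [AddCommMonoid M] [Module R M]
    (B : M →ₗ[R] M →ₗ[R] M) {S : Set M} (hS : Submodule.span R S = ⊤)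
    (h : ∀ ξ ∈ S, ∀ η ∈ S, ∀ ζ ∈ S, B (B ξ η) ζ + B (B η ζ) ξ + B (B ζ ξ) η = 0)
    (ξ η ζ : M) : B (B ξ η) ζ + B (B η ζ) ξ + B (B ζ ξ) η = 0 := by
  -- The Jacobiator is linear in its last argument and invariant under cyclic permutations,
  -- so it can be extended from `S` to the span one argument at a time.
  let J (ξ η : M) : M →ₗ[R] M := B (B ξ η) + B.flip ξ ∘ₗ B η + B.flip η ∘ₗ B.flip ξ
  have hJ (ξ η ζ : M) : J ξ η ζ = B (B ξ η) ζ + B (B η ζ) ξ + B (B ζ ξ) η := rfl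
  have hcyc (ξ η ζ : M) : J ξ η ζ = J ζ ξ η := by
    simp only [hJ]
    abel
  have hext (ξ η : M) (hS' : ∀ ζ ∈ S, J ξ η ζ = 0) (ζ : M) : J ξ η ζ = 0 := by
    rw [ext_on (g := 0) hS hS']
    rfl
  have h₂ (ξ : M) (hξ : ξ ∈ S) (η ζ : M) : J ξ η ζ = 0 :=
    hext ξ η (fun ζ hζ ↦ (hcyc ..).trans <| hext ζ ξ (fun η hη ↦ h ζ hζ ξ hξ η hη) η) ζ
  exact hext ξ η (fun ζ hζ ↦ (hcyc ..).trans (h₂ ζ hζ ξ η)) ζ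

end LinearMap

theorem Finsupp.span_iUnion_image_single_eq_top {ι M R L : Type*} [Semiring R]
    [AddCommMonoid L] [Module R L] {𝒢 : M → Submodule R L} (h𝒢 : ⨆ a, 𝒢 a = ⊤) :
    Submodule.span R (⋃ (i : ι) (a : M), Finsupp.single i '' (𝒢 a : Set L)) = ⊤ := by
  simp only [Submodule.span_iUnion₂, Finsupp.span_single_image, Submodule.span_eq,
    ← Submodule.map_iSup, h𝒢, Submodule.map_top, Finsupp.iSup_lsingle_range]

section TwistedCurrent

variable {M : Type*} [AddCommMonoid M]

theorem twistCoeff_comm (absM : M →+ ℤ) (a b : M) (p q : ℕ) :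
    twistCoeff absM b a q p = twistCoeff absM a b p q := by
  rw [twistCoeff, twistCoeff, add_comm b, add_comm q, mul_comm]

noncomputable def twistCoeff₃ (absM : M →+ ℤ) (a b c : M) (p q r : ℕ) : ℚ :=
  ((absM a : ℚ) ^ p * (absM b : ℚ) ^ q * (absM c : ℚ) ^ r) / (absM (a + b + c) : ℚ) ^ (p + q + r)

theorem twistCoeff₃_rotate (absM : M →+ ℤ) (a b c : M) (p q r : ℕ) :
    twistCoeff₃ absM b c a q r p = twistCoeff₃ absM a b c p q r := by
  rw [twistCoeff₃, twistCoeff₃, ← add_rotate a b c, ← add_rotate p q r]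
  ring

theorem twistCoeff_mul_twistCoeff {absM : M →+ ℤ} {a b : M} (hab : absM (a + b) ≠ 0)
    (c : M) (p q r : ℕ) :
    twistCoeff absM a b p q * twistCoeff absM (a + b) c (p + q) r =
      twistCoeff₃ absM a b c p q r := by
  have : (absM (a + b) : ℚ) ^ (p + q) ≠ 0 := pow_ne_zero _ (Int.cast_ne_zero.mpr hab)
  rw [twistCoeff, twistCoeff, twistCoeff₃]
  field_simp

open Finsupp (single)

variable {L : Type*} [LieRing L] [LieAlgebra ℚ L]

def IsTwistedCurrentBracket (𝒢 : M → Submodule ℚ L) (absM : M →+ ℤ)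
    (B : (ℕ →₀ L) →ₗ[ℚ] (ℕ →₀ L) →ₗ[ℚ] (ℕ →₀ L)) : Prop :=
  ∀ (a b : M) (x y : L), x ∈ 𝒢 a → y ∈ 𝒢 b → ∀ p q : ℕ,
    B (single p x) (single q y) = single (p + q) (twistCoeff absM a b p q • ⁅x, y⁆)

namespace IsTwistedCurrentBracket

variable {𝒢 : M → Submodule ℚ L} {absM : M →+ ℤ}
  {B : (ℕ →₀ L) →ₗ[ℚ] (ℕ →₀ L) →ₗ[ℚ] (ℕ →₀ L)} {a b c : M} {x y z : L}

theorem skew_single (hB : IsTwistedCurrentBracket 𝒢 absM B) (hx : x ∈ 𝒢 a) (hy : y ∈ 𝒢 b)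
    (p q : ℕ) :
    B (single p x) (single q y) = -B (single q y) (single p x) := by
  rw [hB a b x y hx hy, hB b a y x hy hx, twistCoeff_comm absM a b p q, add_comm q p,
    ← lie_skew x y, smul_neg, Finsupp.single_neg]

theorem apply_apply_single (hB : IsTwistedCurrentBracket 𝒢 absM B) (hzero : 𝒢 0 = ⊥)
    (hbracket : ∀ (a b : M) (x y : L), x ∈ 𝒢 a → y ∈ 𝒢 b → ⁅x, y⁆ ∈ 𝒢 (a + b))
    (habs : ∀ a : M, a ≠ 0 → 0 < absM a) (hx : x ∈ 𝒢 a) (hy : y ∈ 𝒢 b) (hz : z ∈ 𝒢 c)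
    (p q r : ℕ) :
    B (B (single p x) (single q y)) (single r z) =
      single (p + q + r) (twistCoeff₃ absM a b c p q r • ⁅⁅x, y⁆, z⁆) := by
  have hxy := hbracket a b x y hx hy
  by_cases hab : absM (a + b) = 0
  · have hab₀ : a + b = 0 := by_contra fun h ↦ (habs _ h).ne' hab
    rw [hab₀, hzero, Submodule.mem_bot] at hxy
    simp [hB a b x y hx hy, hxy]
  · rw [hB a b x y hx hy, ← Finsupp.smul_single, map_smul, LinearMap.smul_apply,
      hB (a + b) c _ z hxy hz, Finsupp.smul_single, smul_smul, twistCoeff_mul_twistCoeff hab]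

theorem jacobi_single (hB : IsTwistedCurrentBracket 𝒢 absM B) (hzero : 𝒢 0 = ⊥)
    (hbracket : ∀ (a b : M) (x y : L), x ∈ 𝒢 a → y ∈ 𝒢 b → ⁅x, y⁆ ∈ 𝒢 (a + b))
    (habs : ∀ a : M, a ≠ 0 → 0 < absM a) (hx : x ∈ 𝒢 a) (hy : y ∈ 𝒢 b) (hz : z ∈ 𝒢 c)
    (p q r : ℕ) :
    B (B (single p x) (single q y)) (single r z) + B (B (single q y) (single r z)) (single p x) +
      B (B (single r z) (single p x)) (single q y) = 0 := by
  simp only [hB.apply_apply_single hzero hbracket habs hx hy hz,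
    hB.apply_apply_single hzero hbracket habs hy hz hx,
    hB.apply_apply_single hzero hbracket habs hz hx hy, twistCoeff₃_rotate,
    ← add_rotate p q r, add_rotate r p q, ← Finsupp.single_add, ← smul_add,
    lie_lie_add_lie_lie_add_lie_lie, smul_zero, Finsupp.single_zero]

end IsTwistedCurrentBracket

end TwistedCurrent

/-- Let `𝔫 = ⊕_{a ∈ M} 𝔫_a` be an `M`-graded Lie algebra over `ℚ`
with `𝔫_0 = 0` and `|·| : M → ℤ` an additive monoid homomorphism positive on
nonzero elements.  The `|·|`-twisted current bracket on `𝔫[u]` (modelled as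
`ℕ →₀ 𝔫`, with `x u^p = Finsupp.single p x`), i.e. the `ℚ`-bilinear bracket `B`
determined by `B (x u^p) (y u^q) = (|a|^p |b|^q / |a+b|^(p+q)) • ⁅x,y⁆ u^(p+q)`
for homogeneous `x ∈ 𝔫_a`, `y ∈ 𝔫_b`, is antisymmetric and satisfies the Jacobi
identity. -/
theorem twisted_current_bracket_is_lie_algebra
    {M : Type*} [AddCommMonoid M] [DecidableEq M]
    {L : Type*} [LieRing L] [LieAlgebra ℚ L]
    (𝒢 : M → Submodule ℚ L)
    (hInternal : DirectSum.IsInternal 𝒢)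
    (hzero : 𝒢 0 = ⊥)
    (hbracket : ∀ (a b : M) (x y : L), x ∈ 𝒢 a → y ∈ 𝒢 b → ⁅x, y⁆ ∈ 𝒢 (a + b))
    (absM : M →+ ℤ)
    (habs : ∀ a : M, a ≠ 0 → 0 < absM a)
    (B : (ℕ →₀ L) →ₗ[ℚ] (ℕ →₀ L) →ₗ[ℚ] (ℕ →₀ L))
    (hB : ∀ (a b : M) (x y : L), x ∈ 𝒢 a → y ∈ 𝒢 b → ∀ p q : ℕ,
      B (Finsupp.single p x) (Finsupp.single q y)
        = Finsupp.single (p + q) (twistCoeff absM a b p q • ⁅x, y⁆)) :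
    (∀ ξ η : ℕ →₀ L, B ξ η = - B η ξ) ∧
      (∀ ξ η ζ : ℕ →₀ L, B (B ξ η) ζ + B (B η ζ) ξ + B (B ζ ξ) η = 0) := by
  have hB : IsTwistedCurrentBracket 𝒢 absM B := hB
  have hspan := Finsupp.span_iUnion_image_single_eq_top (ι := ℕ) hInternal.submodule_iSup_eq_top
  constructor
  · refine B.apply_eq_neg_apply_of_span_eq_top hspan ?_
    simp only [Set.mem_iUnion, Set.mem_image, SetLike.mem_coe]
    rintro _ ⟨p, a, x, hx, rfl⟩ _ ⟨q, b, y, hy, rfl⟩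
    exact hB.skew_single hx hy p q
  · refine B.jacobi_of_span_eq_top hspan ?_
    simp only [Set.mem_iUnion, Set.mem_image, SetLike.mem_coe]
    rintro _ ⟨p, a, x, hx, rfl⟩ _ ⟨q, b, y, hy, rfl⟩ _ ⟨r, c, z, hz, rfl⟩
    exact hB.jacobi_single hzero hbracket habs hx hy hz p q r
end

section
/- Let B : 𝔫[u] × 𝔫[u] → 𝔫[u] be a ℚ-bilinear map such that: (i) for all a, b ∈ M, x ∈ 𝔫_a, y ∈ 𝔫_b and m, n ∈ ℕ, B(x u^m, y u^n) ∈ 𝔫_{a+b} ⊗ ℚ·u^{m+n} (i.e. B(x u^m, y u^n) = z u^{m+n} for some z ∈ 𝔫_{a+b}); (ii) B(x ⊗ 1, y ⊗ 1) = [x,y] ⊗ 1 for all x, y ∈ 𝔫; (iii) ∂ is a derivation for B, that is ∂B(ξ,η) = B(∂ξ, η) + B(ξ, ∂η) for all ξ, η ∈ 𝔫[u]. Then B is the |·|-twisted current bracket: B(x u^m, y u^n) = (|a|^m |b|^n / |a+b|^{m+n}) [x,y] u^{m+n} for all x ∈ 𝔫_a, y ∈ 𝔫_b and m, n ∈ ℕ.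 -/
/-- **uniqueness of the twisted current bracket.**  Let `B` be a
`ℚ`-bilinear map on `𝔫[u] = ℕ →₀ 𝔫` such that (i) `B(x u^m, y u^n)` is of the
form `z u^(m+n)` with `z ∈ 𝔫_(a+b)` for homogeneous `x ∈ 𝔫_a`, `y ∈ 𝔫_b`;
(ii) `B(x ⊗ 1, y ⊗ 1) = ⁅x,y⁆ ⊗ 1` for all `x, y ∈ 𝔫`; (iii) the lowering
operator `∂` is a derivation for `B`.  Then `B` is the `|·|`-twisted current
bracket: `B(x u^m, y u^n) = (|a|^m |b|^n / |a+b|^(m+n)) ⁅x,y⁆ u^(m+n)`. -/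
theorem twisted_current_bracket_unique
    {M : Type*} [AddCommMonoid M] [DecidableEq M]
    {L : Type*} [LieRing L] [LieAlgebra ℚ L]
    (𝒢 : M → Submodule ℚ L)
    (hInternal : DirectSum.IsInternal 𝒢)
    (hzero : 𝒢 0 = ⊥)
    (hbracket : ∀ (a b : M) (x y : L), x ∈ 𝒢 a → y ∈ 𝒢 b → ⁅x, y⁆ ∈ 𝒢 (a + b))
    (absM : M →+ ℤ)
    (habs : ∀ a : M, a ≠ 0 → 0 < absM a)
    (D : (ℕ →₀ L) →ₗ[ℚ] (ℕ →₀ L))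
    (hD : ∀ (a : M) (x : L), x ∈ 𝒢 a → ∀ p : ℕ,
      D (Finsupp.single p x)
        = Finsupp.single (p - 1) (((p : ℚ) * (absM a : ℚ)) • x))
    (B : (ℕ →₀ L) →ₗ[ℚ] (ℕ →₀ L) →ₗ[ℚ] (ℕ →₀ L))
    (hB1 : ∀ (a b : M) (x y : L), x ∈ 𝒢 a → y ∈ 𝒢 b → ∀ m n : ℕ,
      ∃ z : L, z ∈ 𝒢 (a + b) ∧
        B (Finsupp.single m x) (Finsupp.single n y) = Finsupp.single (m + n) z)
    (hB2 : ∀ x y : L,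
      B (Finsupp.single 0 x) (Finsupp.single 0 y) = Finsupp.single 0 ⁅x, y⁆)
    (hB3 : ∀ ξ η : ℕ →₀ L, D (B ξ η) = B (D ξ) η + B ξ (D η)) :
    ∀ (a b : M) (x y : L), x ∈ 𝒢 a → y ∈ 𝒢 b → ∀ m n : ℕ,
      B (Finsupp.single m x) (Finsupp.single n y)
        = Finsupp.single (m + n) (twistCoeff absM a b m n • ⁅x, y⁆) := by
  intro a b x y hx hy
  have single_inj : ∀ (j j' : ℕ) (w w' : L), j = j' →
      Finsupp.single j w = Finsupp.single j' w' → w = w' := by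
    rintro j _ w w' rfl h
    have := congrArg (fun f => f j) h
    simpa using this
  suffices H : ∀ k m n, m + n = k →
      B (Finsupp.single m x) (Finsupp.single n y)
        = Finsupp.single (m + n) (twistCoeff absM a b m n • ⁅x, y⁆) by
    intro m n
    exact H (m + n) m n rfl
  intro k
  induction k with
  | zero =>
    intro m n hmn
    obtain ⟨rfl, rfl⟩ := Nat.add_eq_zero.mp hmn
    simpa [twistCoeff] using hB2 x y
  | succ k ih =>
    intro m n hmn
    obtain ⟨z, hz, hzeq⟩ := hB1 a b x y hx hy m n
    by_cases hab : a + b = 0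
    · have hz0 : z = 0 := by
        rw [hab, hzero, Submodule.mem_bot] at hz
        exact hz
      have hcoeff : twistCoeff absM a b m n = 0 := by
        simp only [twistCoeff, hab, map_zero, Int.cast_zero]
        rw [zero_pow (by omega), div_zero]
      rw [hzeq, hz0, hcoeff, zero_smul]
    · have habQ : (absM (a + b) : ℚ) ≠ 0 := by
        exact_mod_cast (habs _ hab).ne'
      have hder := hB3 (Finsupp.single m x) (Finsupp.single n y)
      rw [hzeq, hD (a + b) z hz (m + n), hD a x hx m, hD b y hy n] at hder
      have e1 : B (Finsupp.single (m - 1) (((m : ℚ) * (absM a : ℚ)) • x))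
            (Finsupp.single n y)
          = ((m : ℚ) * (absM a : ℚ)) •
              B (Finsupp.single (m - 1) x) (Finsupp.single n y) := by
        rw [← Finsupp.smul_single, map_smul, LinearMap.smul_apply]
      have e2 : B (Finsupp.single m x)
            (Finsupp.single (n - 1) (((n : ℚ) * (absM b : ℚ)) • y))
          = ((n : ℚ) * (absM b : ℚ)) •
              B (Finsupp.single m x) (Finsupp.single (n - 1) y) := by
        rw [← Finsupp.smul_single, map_smul]
      rw [e1, e2] at hder
      rcases m with _ | m' <;> rcases n with _ | n'
      · omega
      · -- m = 0, n = n' + 1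
        simp only [Nat.cast_zero, zero_mul, zero_smul, zero_add, Nat.zero_add,
          Nat.add_sub_cancel] at hder
        rw [ih 0 n' (by omega)] at hder
        simp only [Nat.zero_add, Finsupp.smul_single, smul_smul] at hder
        have hzz := single_inj _ _ _ _ (by omega) hder
        have hc0 : (((n' + 1 : ℕ) : ℚ) * (absM (a + b) : ℚ)) ≠ 0 := by
          have h1 : (((n' + 1 : ℕ) : ℚ)) ≠ 0 := by positivity
          exact mul_ne_zero h1 habQ
        have hS : (((n' + 1 : ℕ) : ℚ) * (absM b : ℚ)) * twistCoeff absM a b 0 n'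
            = (((n' + 1 : ℕ) : ℚ) * (absM (a + b) : ℚ)) *
              twistCoeff absM a b 0 (n' + 1) := by
          simp only [twistCoeff]
          generalize ((absM (a + b) : ℚ)) = C at habQ ⊢
          field_simp
          push_cast
          ring
        rw [hS] at hzz
        have hz' := smul_right_injective L hc0 (hzz.trans (mul_smul _ _ _))
        rw [hzeq, hz']
      · -- m = m' + 1, n = 0
        simp only [Nat.cast_zero, zero_mul, zero_smul, add_zero, Nat.add_zero,
          Nat.add_sub_cancel] at hder
        rw [ih m' 0 (by omega)] at hder
        simp only [Nat.add_zero, Finsupp.smul_single, smul_smul] at hder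
        have hzz := single_inj _ _ _ _ (by omega) hder
        have hc0 : (((m' + 1 : ℕ) : ℚ) * (absM (a + b) : ℚ)) ≠ 0 := by
          have h1 : (((m' + 1 : ℕ) : ℚ)) ≠ 0 := by positivity
          exact mul_ne_zero h1 habQ
        have hS : (((m' + 1 : ℕ) : ℚ) * (absM a : ℚ)) * twistCoeff absM a b m' 0
            = (((m' + 1 : ℕ) : ℚ) * (absM (a + b) : ℚ)) *
              twistCoeff absM a b (m' + 1) 0 := by
          simp only [twistCoeff]
          generalize ((absM (a + b) : ℚ)) = C at habQ ⊢
          field_simp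
          push_cast
          ring
        rw [hS] at hzz
        have hz' := smul_right_injective L hc0 (hzz.trans (mul_smul _ _ _))
        rw [hzeq, hz']
      · -- m = m' + 1, n = n' + 1
        simp only [Nat.add_sub_cancel] at hder
        rw [ih m' (n' + 1) (by omega), ih (m' + 1) n' (by omega)] at hder
        simp only [Finsupp.smul_single, smul_smul,
          show m' + (n' + 1) = m' + n' + 1 from by omega,
          show m' + 1 + n' = m' + n' + 1 from by omega,
          ← Finsupp.single_add, ← add_smul] at hder
        have hzz := single_inj _ _ _ _ (by omega) hder
        have hc0 : ((((m' + 1) + (n' + 1) : ℕ) : ℚ) * (absM (a + b) : ℚ)) ≠ 0 := by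
          have h1 : ((((m' + 1) + (n' + 1) : ℕ) : ℚ)) ≠ 0 := by positivity
          exact mul_ne_zero h1 habQ
        have hS : (((m' + 1 : ℕ) : ℚ) * (absM a : ℚ)) * twistCoeff absM a b m' (n' + 1)
              + (((n' + 1 : ℕ) : ℚ) * (absM b : ℚ)) * twistCoeff absM a b (m' + 1) n'
            = ((((m' + 1) + (n' + 1) : ℕ) : ℚ) * (absM (a + b) : ℚ)) *
              twistCoeff absM a b (m' + 1) (n' + 1) := by
          simp only [twistCoeff]
          generalize ((absM (a + b) : ℚ)) = C at habQ ⊢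
          field_simp
          push_cast
          ring
        rw [hS] at hzz
        have hz' := smul_right_injective L hc0 (hzz.trans (mul_smul _ _ _))
        rw [hzeq, hz']
end

section
/- The ℚ-linear map Ψ : 𝔫[u] → 𝔫[u] determined on homogeneous elements by Ψ(x u^p) = |a|^{−p} x u^p for x ∈ 𝔫_a is a Lie algebra isomorphism from the untwisted current algebra (𝔫[u] with the bracket [x u^p, y u^q] = [x,y] u^{p+q}) onto the |·|-twisted current algebra (𝔫[u] with the bracket [x u^p, y u^q] = (|a|^p |b|^q / |a+b|^{p+q}) [x,y] u^{p+q}). -/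
namespace DirectSum.IsInternal

section Semiring

variable {ι R L : Type*} [DecidableEq ι] [Semiring R] [AddCommMonoid L] [Module R L]
  {𝒢 : ι → Submodule R L}

theorem linearMap_ext {N : Type*} [AddCommMonoid N] [Module R N] (h : IsInternal 𝒢)
    {f g : L →ₗ[R] N} (hfg : ∀ i x, x ∈ 𝒢 i → f x = g x) : f = g := by
  refine LinearMap.ext_on (s := ⋃ i, (𝒢 i : Set L)) ?_ fun x hx => ?_
  · rw [← Submodule.iSup_eq_span, h.submodule_iSup_eq_top]
  · obtain ⟨i, hi⟩ := Set.mem_iUnion.1 hx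
    exact hfg i x hi

theorem finsupp_lhom_ext {α N : Type*} [AddCommMonoid N] [Module R N] (h : IsInternal 𝒢)
    {F G : (α →₀ L) →ₗ[R] N}
    (hFG : ∀ i x, x ∈ 𝒢 i → ∀ p, F (Finsupp.single p x) = G (Finsupp.single p x)) :
    F = G :=
  Finsupp.lhom_ext' fun p => h.linearMap_ext fun i x hx => hFG i x hx p

end Semiring

section CommSemiring

variable {ι R L : Type*} [DecidableEq ι] [CommSemiring R] [AddCommMonoid L] [Module R L]
  {𝒢 : ι → Submodule R L}

theorem finsupp_lhom_ext₂ {α β N : Type*} [AddCommMonoid N] [Module R N] (h : IsInternal 𝒢)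
    {F G : (α →₀ L) →ₗ[R] (β →₀ L) →ₗ[R] N}
    (hFG : ∀ i j x y, x ∈ 𝒢 i → y ∈ 𝒢 j → ∀ p q,
      F (Finsupp.single p x) (Finsupp.single q y) = G (Finsupp.single p x) (Finsupp.single q y)) :
    F = G :=
  h.finsupp_lhom_ext fun i x hx p => h.finsupp_lhom_ext fun j y hy q => hFG i j x y hx hy p q

noncomputable def gradedSmul (h : IsInternal 𝒢) (c : ι → R) : L →ₗ[R] L :=
  toModule R ι L (fun i => c i • (𝒢 i).subtype) ∘ₗ
    (LinearEquiv.ofBijective (coeLinearMap 𝒢) h).symm.toLinearMap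

theorem gradedSmul_apply_of_mem (h : IsInternal 𝒢) (c : ι → R) {i : ι} {x : L} (hx : x ∈ 𝒢 i) :
    h.gradedSmul c x = c i • x := by
  have hsymm : (LinearEquiv.ofBijective (coeLinearMap 𝒢) h).symm x
      = lof R ι (fun i => 𝒢 i) i ⟨x, hx⟩ := by
    rw [LinearEquiv.symm_apply_eq]
    exact (coeLinearMap_of 𝒢 i ⟨x, hx⟩).symm
  simp [gradedSmul, hsymm]

noncomputable def finsuppGradedSmul {α : Type*} (h : IsInternal 𝒢) (c : α → ι → R) :
    (α →₀ L) →ₗ[R] (α →₀ L) :=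
  Finsupp.lsum R fun p => Finsupp.lsingle p ∘ₗ h.gradedSmul (c p)

theorem finsuppGradedSmul_single {α : Type*} (h : IsInternal 𝒢) (c : α → ι → R) {i : ι}
    {x : L} (hx : x ∈ 𝒢 i) (p : α) :
    h.finsuppGradedSmul c (Finsupp.single p x) = c p i • Finsupp.single p x := by
  simp [finsuppGradedSmul, h.gradedSmul_apply_of_mem _ hx, Finsupp.smul_single]

end CommSemiring

theorem bijective_of_map_single_eq_smul {ι K L α : Type*} [DecidableEq ι]
    [Field K] [AddCommGroup L] [Module K L] {𝒢 : ι → Submodule K L} (h : IsInternal 𝒢)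
    {Ψ : (α →₀ L) →ₗ[K] (α →₀ L)} {c : α → ι → K}
    (hΨ : ∀ i x, x ∈ 𝒢 i → ∀ p, Ψ (Finsupp.single p x) = c p i • Finsupp.single p x)
    (hc : ∀ p i, 𝒢 i ≠ ⊥ → c p i ≠ 0) :
    Function.Bijective Ψ := by
  let Φ := h.finsuppGradedSmul fun p i => (c p i)⁻¹
  have ne_zero_or : ∀ {i x}, x ∈ 𝒢 i → ∀ p, c p i ≠ 0 ∨ x = 0 := fun {i x} hx p => by
    by_cases hi : 𝒢 i = ⊥
    · rw [hi, Submodule.mem_bot] at hx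
      exact .inr hx
    · exact .inl (hc p i hi)
  have hΦΨ : Φ ∘ₗ Ψ = LinearMap.id := h.finsupp_lhom_ext fun i x hx p => by
    obtain hcp | rfl := ne_zero_or hx p
    · simp only [LinearMap.comp_apply, hΨ i x hx, map_smul, Φ, h.finsuppGradedSmul_single _ hx,
        smul_smul, mul_inv_cancel₀ hcp, one_smul, LinearMap.id_apply]
    · simp
  have hΨΦ : Ψ ∘ₗ Φ = LinearMap.id := h.finsupp_lhom_ext fun i x hx p => by
    obtain hcp | rfl := ne_zero_or hx p
    · simp only [LinearMap.comp_apply, Φ, h.finsuppGradedSmul_single _ hx, map_smul, hΨ i x hx,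
        smul_smul, inv_mul_cancel₀ hcp, one_smul, LinearMap.id_apply]
    · simp
  exact Function.bijective_iff_has_inverse.2
    ⟨Φ, LinearMap.congr_fun hΦΨ, LinearMap.congr_fun hΨΦ⟩

end DirectSum.IsInternal

theorem inv_pow_mul_inv_pow_mul_twistCoeff {M : Type*} [AddCommMonoid M] (absM : M →+ ℤ)
    {a b : M} (ha : 0 < absM a) (hb : 0 < absM b) (p q : ℕ) :
    ((absM a : ℚ) ^ p)⁻¹ * ((absM b : ℚ) ^ q)⁻¹ * twistCoeff absM a b p q
      = ((absM (a + b) : ℚ) ^ (p + q))⁻¹ := by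
  have hab : (absM (a + b) : ℚ) ≠ 0 := by
    rw [map_add, Int.cast_add]
    positivity
  rw [twistCoeff]
  field_simp

/-- The `ℚ`-linear map `Ψ` on `𝔫[u] = ℕ →₀ 𝔫` determined by
`Ψ(x u^p) = |a|^(-p) x u^p` for homogeneous `x ∈ 𝔫_a` is a Lie algebra
isomorphism from the untwisted current algebra (bracket
`B₀(x u^p, y u^q) = ⁅x,y⁆ u^(p+q)`) onto the `|·|`-twisted current algebra
(bracket `B₁(x u^p, y u^q) = (|a|^p |b|^q / |a+b|^(p+q)) ⁅x,y⁆ u^(p+q)`):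
`Ψ` is bijective and intertwines the two brackets. -/
theorem rescaling_is_iso_from_untwisted_to_twisted
    {M : Type*} [AddCommMonoid M] [DecidableEq M]
    {L : Type*} [LieRing L] [LieAlgebra ℚ L]
    (𝒢 : M → Submodule ℚ L)
    (hInternal : DirectSum.IsInternal 𝒢)
    (hzero : 𝒢 0 = ⊥)
    (hbracket : ∀ (a b : M) (x y : L), x ∈ 𝒢 a → y ∈ 𝒢 b → ⁅x, y⁆ ∈ 𝒢 (a + b))
    (absM : M →+ ℤ)
    (habs : ∀ a : M, a ≠ 0 → 0 < absM a)
    (B₀ : (ℕ →₀ L) →ₗ[ℚ] (ℕ →₀ L) →ₗ[ℚ] (ℕ →₀ L))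
    (hB₀ : ∀ (a b : M) (x y : L), x ∈ 𝒢 a → y ∈ 𝒢 b → ∀ p q : ℕ,
      B₀ (Finsupp.single p x) (Finsupp.single q y)
        = Finsupp.single (p + q) ⁅x, y⁆)
    (B₁ : (ℕ →₀ L) →ₗ[ℚ] (ℕ →₀ L) →ₗ[ℚ] (ℕ →₀ L))
    (hB₁ : ∀ (a b : M) (x y : L), x ∈ 𝒢 a → y ∈ 𝒢 b → ∀ p q : ℕ,
      B₁ (Finsupp.single p x) (Finsupp.single q y)
        = Finsupp.single (p + q) (twistCoeff absM a b p q • ⁅x, y⁆))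
    (Ψ : (ℕ →₀ L) →ₗ[ℚ] (ℕ →₀ L))
    (hΨ : ∀ (a : M) (x : L), x ∈ 𝒢 a → ∀ p : ℕ,
      Ψ (Finsupp.single p x) = (((absM a : ℚ) ^ p)⁻¹) • Finsupp.single p x) :
    Function.Bijective Ψ ∧
      ∀ ξ η : ℕ →₀ L, Ψ (B₀ ξ η) = B₁ (Ψ ξ) (Ψ η) := by
  have hdeg : ∀ {a x}, x ∈ 𝒢 a → x ≠ 0 → 0 < absM a := fun {a x} hx hx0 =>
    habs a (by rintro rfl; exact hx0 (by rwa [hzero, Submodule.mem_bot] at hx))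
  refine ⟨hInternal.bijective_of_map_single_eq_smul hΨ fun p a ha => ?_, fun ξ η => ?_⟩
  · obtain ⟨x, hx, hx0⟩ := (Submodule.ne_bot_iff _).1 ha
    have := hdeg hx hx0
    positivity
  have key : B₀.compr₂ Ψ = B₁.compl₁₂ Ψ Ψ :=
    hInternal.finsupp_lhom_ext₂ fun a b x y hx hy p q => by
      rcases eq_or_ne x 0 with rfl | hx0
      · simp
      rcases eq_or_ne y 0 with rfl | hy0
      · simp
      simp only [LinearMap.compr₂_apply, LinearMap.compl₁₂_apply, hB₀ a b x y hx hy,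
        hΨ _ _ (hbracket a b x y hx hy), hΨ a x hx, hΨ b y hy, map_smul, LinearMap.smul_apply,
        hB₁ a b x y hx hy, ← Finsupp.smul_single, smul_smul]
      rw [← inv_pow_mul_inv_pow_mul_twistCoeff absM (hdeg hx hx0) (hdeg hy hy0)]
      congr 1
      ring
  exact LinearMap.congr_fun₂ key ξ η
end

section
/- The universal enveloping algebra of the |·|-twisted current algebra (𝔫[u] with the bracket [x u^p, y u^q] = (|a|^p |b|^q / |a+b|^{p+q}) [x,y] u^{p+q}) is isomorphic, as an associative unital ℚ-algebra, to the universal enveloping algebra of the untwisted current algebra (𝔫[u] with the bracket [x u^p, y u^q] = [x,y] u^{p+q}). -/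
attribute [local instance 100] LieRing.ofAssociativeRing

namespace UniversalEnvelopingAlgebra

variable {R : Type*} [CommRing R] {L₁ L₂ : Type*} [LieRing L₁] [LieAlgebra R L₁]
  [LieRing L₂] [LieAlgebra R L₂]

noncomputable def mapEquiv (e : L₁ ≃ₗ⁅R⁆ L₂) :
    UniversalEnvelopingAlgebra R L₁ ≃ₐ[R] UniversalEnvelopingAlgebra R L₂ :=
  AlgEquiv.ofAlgHom (lift R ((ι R).comp e.toLieHom)) (lift R ((ι R).comp e.symm.toLieHom))
    (by ext x; simp) (by ext x; simp)

end UniversalEnvelopingAlgebra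

namespace DirectSum.IsInternal

variable {ι R L : Type*} [DecidableEq ι] [CommRing R] [AddCommGroup L] [Module R L]
  {𝒢 : ι → Submodule R L}

noncomputable def scaleEquiv (h : IsInternal 𝒢) (c : ι → Rˣ) : L ≃ₗ[R] L :=
  (LinearEquiv.ofBijective (coeLinearMap 𝒢) h).symm ≪≫ₗ
    DFinsupp.mapRange.linearEquiv (fun i => LinearEquiv.smulOfUnit (c i)) ≪≫ₗ
    LinearEquiv.ofBijective (coeLinearMap 𝒢) h

theorem scaleEquiv_apply_of_mem (h : IsInternal 𝒢) (c : ι → Rˣ) {i : ι} {x : L}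
    (hx : x ∈ 𝒢 i) : h.scaleEquiv c x = (c i : R) • x := by
  have hdecomp : (LinearEquiv.ofBijective (coeLinearMap 𝒢) h).symm x
      = of (fun i => 𝒢 i) i ⟨x, hx⟩ :=
    (LinearEquiv.symm_apply_eq _).2 (coeLinearMap_of 𝒢 i ⟨x, hx⟩).symm
  rw [scaleEquiv, LinearEquiv.trans_apply, LinearEquiv.trans_apply, hdecomp]
  exact (congrArg _ (DFinsupp.mapRange_single (hf := fun _ => map_zero _))).trans
    (coeLinearMap_of 𝒢 i _)

theorem bilinear_ext (h : IsInternal 𝒢) {N : Type*} [AddCommGroup N] [Module R N]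
    {f g : L →ₗ[R] L →ₗ[R] N}
    (hfg : ∀ i j x y, x ∈ 𝒢 i → y ∈ 𝒢 j → f x y = g x y) : f = g := by
  have hspan : Submodule.span R (⋃ i, (𝒢 i : Set L)) = ⊤ := by
    rw [← Submodule.iSup_eq_span, h.submodule_iSup_eq_top]
  refine LinearMap.ext_on hspan fun x hx => LinearMap.ext_on hspan fun y hy => ?_
  obtain ⟨i, hx⟩ := Set.mem_iUnion.1 hx
  obtain ⟨j, hy⟩ := Set.mem_iUnion.1 hy
  exact hfg i j x y hx hy

theorem finsupp_bilinear_ext (h : IsInternal 𝒢) {κ N : Type*} [AddCommGroup N] [Module R N]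
    {f g : (κ →₀ L) →ₗ[R] (κ →₀ L) →ₗ[R] N}
    (hfg : ∀ i j x y, x ∈ 𝒢 i → y ∈ 𝒢 j → ∀ p q,
      f (.single p x) (.single q y) = g (.single p x) (.single q y)) : f = g := by
  ext p x q y
  have hpq := h.bilinear_ext (f := f.compl₁₂ (Finsupp.lsingle p) (Finsupp.lsingle q))
    (g := g.compl₁₂ (Finsupp.lsingle p) (Finsupp.lsingle q))
    fun i j x y hx hy => hfg i j x y hx hy p q
  exact LinearMap.congr_fun₂ hpq x y

end DirectSum.IsInternal

namespace Finsupp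

variable {ι R L : Type*} [DecidableEq ι] [CommRing R] [AddCommGroup L] [Module R L]

noncomputable def mapRangeFamilyLinearEquiv (τ : ι → L ≃ₗ[R] L) : (ι →₀ L) ≃ₗ[R] (ι →₀ L) :=
  finsuppLEquivDirectSum R L ι ≪≫ₗ DFinsupp.mapRange.linearEquiv τ ≪≫ₗ
    (finsuppLEquivDirectSum R L ι).symm

theorem mapRangeFamilyLinearEquiv_single (τ : ι → L ≃ₗ[R] L) (p : ι) (x : L) :
    mapRangeFamilyLinearEquiv τ (single p x) = single p (τ p x) := by
  have hlof : DFinsupp.mapRange.linearEquiv τ (DirectSum.lof R ι (fun _ => L) p x)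
      = DirectSum.lof R ι (fun _ => L) p (τ p x) :=
    DFinsupp.mapRange_single (hf := fun _ => map_zero _)
  rw [mapRangeFamilyLinearEquiv, LinearEquiv.trans_apply, LinearEquiv.trans_apply,
    finsuppLEquivDirectSum_single, hlof, finsuppLEquivDirectSum_symm_lof]

end Finsupp

section TwistedCurrent

variable {M : Type*} [AddCommMonoid M] [DecidableEq M] {L : Type*} [LieRing L] [LieAlgebra ℚ L]
  {𝒢 : M → Submodule ℚ L} (absM : M →+ ℤ)

/-- The value at `a = 0` only keeps the weight invertible: `𝔫_0 = 0`. -/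
def twistWeight (p : ℕ) (a : M) : ℚ := if a = 0 then 1 else (absM a : ℚ) ^ p

variable {absM}

theorem twistWeight_ne_zero (habs : ∀ a : M, a ≠ 0 → 0 < absM a) (p : ℕ) (a : M) :
    twistWeight absM p a ≠ 0 := by
  unfold twistWeight
  split_ifs with ha
  · exact one_ne_zero
  · exact pow_ne_zero _ (Int.cast_ne_zero.2 (habs a ha).ne')

theorem twistCoeff_mul_twistWeight {a b : M} (ha : a ≠ 0) (hb : b ≠ 0) (hab : absM (a + b) ≠ 0)
    (p q : ℕ) :
    twistCoeff absM a b p q * twistWeight absM (p + q) (a + b)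
      = twistWeight absM p a * twistWeight absM q b := by
  have hab' : a + b ≠ 0 := fun h => hab (h ▸ map_zero absM)
  simp only [twistWeight, twistCoeff, if_neg ha, if_neg hb, if_neg hab']
  exact div_mul_cancel₀ _ (pow_ne_zero _ (Int.cast_ne_zero.2 hab))

noncomputable def untwist (hI : DirectSum.IsInternal 𝒢) (habs : ∀ a : M, a ≠ 0 → 0 < absM a) :
    (ℕ →₀ L) ≃ₗ[ℚ] (ℕ →₀ L) :=
  Finsupp.mapRangeFamilyLinearEquiv fun p =>
    hI.scaleEquiv fun a => Units.mk0 _ (twistWeight_ne_zero habs p a)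

theorem untwist_single (hI : DirectSum.IsInternal 𝒢) (habs : ∀ a : M, a ≠ 0 → 0 < absM a)
    {a : M} {x : L} (hx : x ∈ 𝒢 a) (p : ℕ) :
    untwist hI habs (.single p x) = .single p (twistWeight absM p a • x) := by
  rw [untwist, Finsupp.mapRangeFamilyLinearEquiv_single, hI.scaleEquiv_apply_of_mem _ hx,
    Units.val_mk0]

theorem lie_eq_zero_or_twistCoeff_mul_twistWeight (hzero : 𝒢 0 = ⊥)
    (hbracket : ∀ (a b : M) (x y : L), x ∈ 𝒢 a → y ∈ 𝒢 b → ⁅x, y⁆ ∈ 𝒢 (a + b))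
    (habs : ∀ a : M, a ≠ 0 → 0 < absM a) {a b : M} {x y : L} (hx : x ∈ 𝒢 a) (hy : y ∈ 𝒢 b)
    (p q : ℕ) :
    ⁅x, y⁆ = 0 ∨ twistCoeff absM a b p q * twistWeight absM (p + q) (a + b)
      = twistWeight absM p a * twistWeight absM q b := by
  have mem_zero : ∀ {z : L}, z ∈ 𝒢 0 → z = 0 := fun hz => by
    rwa [hzero, Submodule.mem_bot] at hz
  obtain rfl | ha := eq_or_ne a 0
  · simp [mem_zero hx]
  obtain rfl | hb := eq_or_ne b 0
  · simp [mem_zero hy]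
  by_cases hab : a + b = 0
  · exact .inl (mem_zero (hab ▸ hbracket a b x y hx hy))
  · exact .inr (twistCoeff_mul_twistWeight ha hb (habs _ hab).ne' p q)

theorem untwist_intertwines (hI : DirectSum.IsInternal 𝒢) (hzero : 𝒢 0 = ⊥)
    (hbracket : ∀ (a b : M) (x y : L), x ∈ 𝒢 a → y ∈ 𝒢 b → ⁅x, y⁆ ∈ 𝒢 (a + b))
    (habs : ∀ a : M, a ≠ 0 → 0 < absM a)
    {B₀ B₁ : (ℕ →₀ L) →ₗ[ℚ] (ℕ →₀ L) →ₗ[ℚ] (ℕ →₀ L)}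
    (hB₀ : ∀ (a b : M) (x y : L), x ∈ 𝒢 a → y ∈ 𝒢 b → ∀ p q : ℕ,
      B₀ (Finsupp.single p x) (Finsupp.single q y) = Finsupp.single (p + q) ⁅x, y⁆)
    (hB₁ : ∀ (a b : M) (x y : L), x ∈ 𝒢 a → y ∈ 𝒢 b → ∀ p q : ℕ,
      B₁ (Finsupp.single p x) (Finsupp.single q y)
        = Finsupp.single (p + q) (twistCoeff absM a b p q • ⁅x, y⁆)) :
    B₁.compr₂ (untwist hI habs).toLinearMap
      = B₀.compl₁₂ (untwist hI habs).toLinearMap (untwist hI habs).toLinearMap := by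
  refine hI.finsupp_bilinear_ext fun a b x y hx hy p q => ?_
  have hxy := hbracket a b x y hx hy
  simp only [LinearMap.compr₂_apply, LinearMap.compl₁₂_apply, LinearEquiv.coe_coe,
    hB₁ a b x y hx hy, untwist_single hI habs (Submodule.smul_mem _ _ hxy),
    untwist_single hI habs hx, untwist_single hI habs hy,
    hB₀ a b _ _ (Submodule.smul_mem _ _ hx) (Submodule.smul_mem _ _ hy), smul_lie, lie_smul,
    smul_smul]
  rcases lie_eq_zero_or_twistCoeff_mul_twistWeight hzero hbracket habs hx hy p q with h | h
  · simp [h]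
  · rw [mul_comm, h, mul_comm]

end TwistedCurrent

/-- The universal enveloping algebra of the `|·|`-twisted
current algebra (a Lie algebra `L₁` over `ℚ` identified, via a linear
equivalence `e₁` with `𝔫[u] = ℕ →₀ 𝔫`, with the bracket
`⁅x u^p, y u^q⁆ = (|a|^p |b|^q / |a+b|^(p+q)) ⁅x,y⁆ u^(p+q)`) is isomorphic,
as an associative unital `ℚ`-algebra, to the universal enveloping algebra of
the untwisted current algebra (a Lie algebra `L₀` identified via `e₀` with
`𝔫[u]` with the bracket `⁅x u^p, y u^q⁆ = ⁅x,y⁆ u^(p+q)`). -/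
theorem enveloping_algebra_of_twisted_iso_untwisted
    {M : Type*} [AddCommMonoid M] [DecidableEq M]
    {L : Type*} [LieRing L] [LieAlgebra ℚ L]
    (𝒢 : M → Submodule ℚ L)
    (hInternal : DirectSum.IsInternal 𝒢)
    (hzero : 𝒢 0 = ⊥)
    (hbracket : ∀ (a b : M) (x y : L), x ∈ 𝒢 a → y ∈ 𝒢 b → ⁅x, y⁆ ∈ 𝒢 (a + b))
    (absM : M →+ ℤ)
    (habs : ∀ a : M, a ≠ 0 → 0 < absM a)
    (B₀ : (ℕ →₀ L) →ₗ[ℚ] (ℕ →₀ L) →ₗ[ℚ] (ℕ →₀ L))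
    (hB₀ : ∀ (a b : M) (x y : L), x ∈ 𝒢 a → y ∈ 𝒢 b → ∀ p q : ℕ,
      B₀ (Finsupp.single p x) (Finsupp.single q y)
        = Finsupp.single (p + q) ⁅x, y⁆)
    (B₁ : (ℕ →₀ L) →ₗ[ℚ] (ℕ →₀ L) →ₗ[ℚ] (ℕ →₀ L))
    (hB₁ : ∀ (a b : M) (x y : L), x ∈ 𝒢 a → y ∈ 𝒢 b → ∀ p q : ℕ,
      B₁ (Finsupp.single p x) (Finsupp.single q y)
        = Finsupp.single (p + q) (twistCoeff absM a b p q • ⁅x, y⁆))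
    {L₀ : Type*} [LieRing L₀] [LieAlgebra ℚ L₀]
    {L₁ : Type*} [LieRing L₁] [LieAlgebra ℚ L₁]
    (e₀ : L₀ ≃ₗ[ℚ] (ℕ →₀ L)) (e₁ : L₁ ≃ₗ[ℚ] (ℕ →₀ L))
    (he₀ : ∀ x y : L₀, e₀ ⁅x, y⁆ = B₀ (e₀ x) (e₀ y))
    (he₁ : ∀ x y : L₁, e₁ ⁅x, y⁆ = B₁ (e₁ x) (e₁ y)) :
    Nonempty ((UniversalEnvelopingAlgebra ℚ L₁) ≃ₐ[ℚ]
      (UniversalEnvelopingAlgebra ℚ L₀)) := by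
  have hT := untwist_intertwines hInternal hzero hbracket habs hB₀ hB₁
  let E : L₁ ≃ₗ⁅ℚ⁆ L₀ :=
    { e₁ ≪≫ₗ untwist hInternal habs ≪≫ₗ e₀.symm with
      map_lie' := fun {x y} => e₀.injective <| by
        simpa [he₀, he₁] using LinearMap.congr_fun₂ hT (e₁ x) (e₁ y) }
  exact ⟨UniversalEnvelopingAlgebra.mapEquiv E⟩
end

section
/- For all d, e ∈ ℤ^{Q_0}: ⟨d,e⟩_Q + ⟨e,d⟩_Q ≡ ⟨d,e⟩_{Q̃} + ⟨d,d⟩_{Q̃}·⟨e,e⟩_{Q̃} (mod 2). Consequently, the reduction mod 2 of the Euler form ⟨·,·⟩_Q of Q is a bilinear form ψ satisfying the sign-twist condition ψ(d,e) + ψ(e,d) = τ(d,e) for the triple quiver Q̃, where τ(d,e) := ⟨d,e⟩_{Q̃} + ⟨d,d⟩_{Q̃}·⟨e,e⟩_{Q̃} mod 2. -/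
/-- The Euler form of a finite quiver with vertex set `V`, arrow set `A` and
source and target maps `s, t : A → V`:
`⟨d,e⟩ = Σ_i d_i e_i − Σ_α d_(s α) e_(t α)`. -/
def eulerForm {V A : Type*} [Fintype V] [Fintype A] (s t : A → V)
    (d e : V → ℤ) : ℤ :=
  (∑ i, d i * e i) - ∑ α, d (s α) * e (t α)

/-- The source map of the triple quiver `Q̃`: arrows of `Q̃` are arrows of `Q`,
reversed arrows of `Q`, and a loop `ω_i` at each vertex `i`. -/
def tripleSource {V A : Type*} (s t : A → V) : A ⊕ A ⊕ V → V
  | Sum.inl α => s α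
  | Sum.inr (Sum.inl α) => t α
  | Sum.inr (Sum.inr i) => i

/-- The target map of the triple quiver `Q̃`. -/
def tripleTarget {V A : Type*} (s t : A → V) : A ⊕ A ⊕ V → V
  | Sum.inl α => t α
  | Sum.inr (Sum.inl α) => s α
  | Sum.inr (Sum.inr i) => i

lemma triple_eulerForm {V A : Type*} [Fintype V] [Fintype A] (s t : A → V)
    (d e : V → ℤ) :
    eulerForm (tripleSource s t) (tripleTarget s t) d e
      = -(∑ α, d (s α) * e (t α)) - ∑ α, d (t α) * e (s α) := by
  simp only [eulerForm, tripleSource, tripleTarget, Fintype.sum_sum_type]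
  ring

/-- For all `d, e ∈ ℤ^(Q₀)`:
`⟨d,e⟩_Q + ⟨e,d⟩_Q ≡ ⟨d,e⟩_(Q̃) + ⟨d,d⟩_(Q̃)·⟨e,e⟩_(Q̃) (mod 2)`.  Consequently
the reduction mod `2` of the Euler form of `Q` is a bilinear form `ψ`
satisfying the sign-twist condition `ψ(d,e) + ψ(e,d) = τ(d,e)` for the triple
quiver `Q̃`, where `τ(d,e) = ⟨d,e⟩_(Q̃) + ⟨d,d⟩_(Q̃) ⟨e,e⟩_(Q̃) mod 2`. -/
theorem euler_form_valid_sign_twist_for_triple_quiver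
    {V A : Type*} [Fintype V] [Fintype A] (s t : A → V) (d e : V → ℤ) :
    ((eulerForm s t d e + eulerForm s t e d) ≡
      (eulerForm (tripleSource s t) (tripleTarget s t) d e
        + eulerForm (tripleSource s t) (tripleTarget s t) d d
          * eulerForm (tripleSource s t) (tripleTarget s t) e e) [ZMOD 2]) ∧
    ((eulerForm s t d e : ZMod 2) + (eulerForm s t e d : ZMod 2)
      = (eulerForm (tripleSource s t) (tripleTarget s t) d e : ZMod 2)
        + (eulerForm (tripleSource s t) (tripleTarget s t) d d : ZMod 2)
          * (eulerForm (tripleSource s t) (tripleTarget s t) e e : ZMod 2)) := by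
  have key : eulerForm s t d e + eulerForm s t e d ≡
      eulerForm (tripleSource s t) (tripleTarget s t) d e
        + eulerForm (tripleSource s t) (tripleTarget s t) d d
          * eulerForm (tripleSource s t) (tripleTarget s t) e e [ZMOD 2] := by
    rw [triple_eulerForm s t d e, triple_eulerForm s t d d, triple_eulerForm s t e e]
    simp only [eulerForm]
    have h1 : (∑ α, e (s α) * d (t α)) = ∑ α, d (t α) * e (s α) :=
      Finset.sum_congr rfl fun _ _ => mul_comm _ _
    have h2 : (∑ α, e (t α) * e (s α)) = ∑ α, e (s α) * e (t α) :=
      Finset.sum_congr rfl fun _ _ => mul_comm _ _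
    have h3 : (∑ α, d (t α) * d (s α)) = ∑ α, d (s α) * d (t α) :=
      Finset.sum_congr rfl fun _ _ => mul_comm _ _
    have h4 : (∑ i, e i * d i) = ∑ i, d i * e i :=
      Finset.sum_congr rfl fun _ _ => mul_comm _ _
    rw [h1, h2, h3, h4, Int.modEq_iff_dvd]
    exact ⟨-(∑ i, d i * e i) + 2 * (∑ α, d (s α) * d (t α)) * (∑ α, e (s α) * e (t α)),
      by ring⟩
  refine ⟨key, ?_⟩
  have := (ZMod.intCast_eq_intCast_iff _ _ 2).mpr key
  push_cast at this
  exact this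
end
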